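/- Let F₁(x) = −1/(1 + x) and F₂(x) = −(x² + 4x + 7)/(8(1 + x)⁴) for x ≠ −1, let μ₂ ∈ ℝ, and let F₃ : ℝ \ {−1, 1} → ℝ satisfy (x² − 1)·F₃(x) = μ₂ − (F₁'(x)·F₂(x) + F₂'(x)·F₁(x)) for all x ∉ {−1, 1} (the order-ε³ condition of the invariance equation for the Van der Pol system with μ₀ = 1 and μ₁ = −1/8). Then F₃ has a finite limit as x → 1 if and only if μ₂ = −3/32. -/

import Mathlib

open Filter Topology

/-!
Substituting the closed forms of `F₁'` and `F₂'` turns the order-`ε³` condition into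
`(x² − 1)·F₃(x) = μ₂ − c(x)` with `c(x) = −(3x² + 14x + 31)/(8(1 + x)⁶)`, a function that is
smooth at the fold `x = 1`. If `F₃` has a limit there, the left side tends to `0`, so
`μ₂ = c(1) = −3/32`. Conversely, if `μ₂ = c(1)` both sides vanish at `x = 1` and `F₃` is a
quotient of two difference quotients, which tends to `−c'(1)/2 = −31/256`.
-/

theorem eq_zero_of_tendsto_of_mul_eventuallyEq {α R : Type*} [TopologicalSpace R]
    [MulZeroClass R] [ContinuousMul R] [T2Space R] {l : Filter α} [l.NeBot]
    {f q g : α → R} {b L : R} (hq : Tendsto q l (𝓝 0)) (hg : Tendsto g l (𝓝 b))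
    (hfg : ∀ᶠ x in l, q x * f x = g x) (hf : Tendsto f l (𝓝 L)) : b = 0 := by
  have hqf : Tendsto (fun x => q x * f x) l (𝓝 0) := by
    simpa only [zero_mul] using hq.mul hf
  exact tendsto_nhds_unique (hg.congr' (hfg.mono fun _ hx => hx.symm)) hqf

theorem tendsto_div_of_mul_eventuallyEq {𝕜 : Type*} [NontriviallyNormedField 𝕜]
    {f q g : 𝕜 → 𝕜} {a q' g' : 𝕜} (hq : HasDerivAt q q' a) (hq₀ : q a = 0) (hq' : q' ≠ 0)
    (hg : HasDerivAt g g' a) (hg₀ : g a = 0) (hfg : ∀ᶠ x in 𝓝[≠] a, q x * f x = g x) :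
    Tendsto f (𝓝[≠] a) (𝓝 (g' / q')) := by
  have hq_slope := hasDerivAt_iff_tendsto_slope.mp hq
  have hg_slope := hasDerivAt_iff_tendsto_slope.mp hg
  refine (hg_slope.div hq_slope hq').congr' ?_
  filter_upwards [hfg, hq_slope.eventually_ne hq', self_mem_nhdsWithin]
    with x hx hslope (hxa : x ≠ a)
  rw [slope_def_field, hq₀, sub_zero] at hslope
  have hqx : q x ≠ 0 := fun h => hslope (by rw [h, zero_div])
  rw [Pi.div_apply, slope_def_field, slope_def_field, hq₀, hg₀, sub_zero, sub_zero, ← hx]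
  field_simp

theorem hasDerivAt_neg_one_div_one_add {x : ℝ} (hx : 1 + x ≠ 0) :
    HasDerivAt (fun x : ℝ => -1 / (1 + x)) (1 / (1 + x) ^ 2) x := by
  have hden : HasDerivAt (fun x : ℝ => 1 + x) 1 x := (hasDerivAt_id x).const_add 1
  refine ((hasDerivAt_const x (-1 : ℝ)).div hden hx).congr_deriv ?_
  ring

theorem hasDerivAt_neg_quadratic_div_eight_mul_one_add_pow_four {x : ℝ} (hx : 1 + x ≠ 0) :
    HasDerivAt (fun x : ℝ => -(x ^ 2 + 4 * x + 7) / (8 * (1 + x) ^ 4))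
      ((x ^ 2 + 5 * x + 12) / (4 * (1 + x) ^ 5)) x := by
  have hquad : HasDerivAt (fun x : ℝ => x ^ 2 + 4 * x + 7) (2 * x + 4) x := by
    simpa using ((hasDerivAt_pow 2 x).add ((hasDerivAt_id x).const_mul 4)).add_const (7 : ℝ)
  have hden : HasDerivAt (fun x : ℝ => 8 * (1 + x) ^ 4) (8 * (4 * (1 + x) ^ 3)) x := by
    simpa using (((hasDerivAt_id x).const_add (1 : ℝ)).pow 4).const_mul (8 : ℝ)
  refine (hquad.neg.div hden (by positivity)).congr_deriv ?_
  simp only [Pi.neg_apply]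
  field_simp
  ring

noncomputable def vdpOrderThreeForcing (x : ℝ) : ℝ :=
  (-3 * x ^ 2 - 14 * x - 31) / (8 * (1 + x) ^ 6)

theorem deriv_mul_add_deriv_mul_eq_vdpOrderThreeForcing {x : ℝ} (hx : 1 + x ≠ 0) :
    deriv (fun x : ℝ => -1 / (1 + x)) x * (-(x ^ 2 + 4 * x + 7) / (8 * (1 + x) ^ 4)) +
        deriv (fun x : ℝ => -(x ^ 2 + 4 * x + 7) / (8 * (1 + x) ^ 4)) x * (-1 / (1 + x)) =
      vdpOrderThreeForcing x := by
  rw [(hasDerivAt_neg_one_div_one_add hx).deriv,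
    (hasDerivAt_neg_quadratic_div_eight_mul_one_add_pow_four hx).deriv, vdpOrderThreeForcing]
  field_simp
  ring

theorem vdpOrderThreeForcing_one : vdpOrderThreeForcing 1 = -3 / 32 := by
  norm_num [vdpOrderThreeForcing]

theorem hasDerivAt_vdpOrderThreeForcing_one : HasDerivAt vdpOrderThreeForcing (31 / 128) 1 := by
  have hnum : HasDerivAt (fun x : ℝ => -3 * x ^ 2 - 14 * x - 31) (-3 * (2 * 1) - 14) 1 := by
    simpa using (((hasDerivAt_pow 2 (1 : ℝ)).const_mul (-3)).sub
      ((hasDerivAt_id (1 : ℝ)).const_mul 14)).sub_const 31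
  have hden : HasDerivAt (fun x : ℝ => 8 * (1 + x) ^ 6) (8 * (6 * (1 + 1) ^ 5)) 1 := by
    simpa using (((hasDerivAt_id (1 : ℝ)).const_add (1 : ℝ)).pow 6).const_mul (8 : ℝ)
  exact (hnum.div hden (by norm_num)).congr_deriv (by norm_num)

/-- Order-`ε³` condition for the Van der Pol canard (with `μ₀ = 1`, `μ₁ = −1/8`): if
`(x² − 1)·F₃(x) = μ₂ − (F₁'(x)·F₂(x) + F₂'(x)·F₁(x))` away from `x = ±1`, where
`F₁(x) = −1/(1+x)` and `F₂(x) = −(x² + 4x + 7)/(8(1+x)⁴)`, then `F₃` has a finite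
limit as `x → 1` iff `μ₂ = −3/32`. -/
theorem vdp_order_three (μ₂ : ℝ) (F₃ : ℝ → ℝ)
    (F₁ F₂ : ℝ → ℝ)
    (hF₁ : F₁ = fun x => -1 / (1 + x))
    (hF₂ : F₂ = fun x => -(x ^ 2 + 4 * x + 7) / (8 * (1 + x) ^ 4))
    (h : ∀ x : ℝ, x ≠ -1 → x ≠ 1 →
      (x ^ 2 - 1) * F₃ x = μ₂ - (deriv F₁ x * F₂ x + deriv F₂ x * F₁ x)) :
    (∃ L : ℝ, Tendsto F₃ (𝓝[≠] (1 : ℝ)) (𝓝 L)) ↔ μ₂ = -3 / 32 := by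
  subst hF₁ hF₂
  have hfg : ∀ᶠ x in 𝓝[≠] (1 : ℝ), (x ^ 2 - 1) * F₃ x = μ₂ - vdpOrderThreeForcing x := by
    filter_upwards [nhdsWithin_le_nhds (eventually_ne_nhds (by norm_num : (1 : ℝ) ≠ -1)),
      self_mem_nhdsWithin] with x hx hx1
    rw [h x hx hx1, deriv_mul_add_deriv_mul_eq_vdpOrderThreeForcing
      (fun h => hx (by linarith))]
  have hq : HasDerivAt (fun x : ℝ => x ^ 2 - 1) (2 * 1) 1 := by
    simpa using (hasDerivAt_pow 2 (1 : ℝ)).sub_const 1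
  have hg := hasDerivAt_vdpOrderThreeForcing_one.const_sub μ₂
  constructor
  · rintro ⟨L, hL⟩
    have hμ := eq_zero_of_tendsto_of_mul_eventuallyEq
      (by simpa using hq.continuousAt.tendsto.mono_left nhdsWithin_le_nhds)
      (hg.continuousAt.tendsto.mono_left nhdsWithin_le_nhds) hfg hL
    rwa [vdpOrderThreeForcing_one, sub_eq_zero] at hμ
  · intro hμ
    exact ⟨_, tendsto_div_of_mul_eventuallyEq hq (by norm_num) (by norm_num) hg
      (by rw [hμ, vdpOrderThreeForcing_one, sub_self]) hfg⟩
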